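/- arXiv:math/0407177 — 8 statements merged into one kernel-verified Lean document; each statement's English description precedes it below -/
import Mathlib

section
/- Let N ≥ 2, let a_0, …, a_N be complex numbers, let x, y ∈ ℝ and set p̂ = 2x and q̂ = −(x² + y²). Define b_{N+1} = 0, b_N = a_N, and b_n = a_n + p̂·b_{n+1} + q̂·b_{n+2} for n = N−1, …, 1, and set b_0 = a_0 + q̂·b_2. Then the polynomial identity Σ_{n=0}^{N} a_n λ^n = (λ² − p̂·λ − q̂)·Σ_{n=2}^{N} b_n λ^{n−2} + b_1·λ + b_0 holds (as an identity of polynomials in λ over ℂ). -/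
open Finset Polynomial

/-- The division identity underlying Goertzel's algorithm: dividing
`∑ n ≤ N, a n * λ^n` by the quadratic `λ² - p̂ λ - q̂` (with `p̂ = 2x`,
`q̂ = -(x² + y²)`) produces the quotient with coefficients `b n` generated by
the Goertzel backward recurrence and the remainder `b 1 * λ + b 0`. -/
theorem goertzel_division_identity (N : ℕ) (hN : 2 ≤ N) (a : ℕ → ℂ) (x y : ℝ)
    (phat qhat : ℝ) (hp : phat = 2 * x) (hq : qhat = -(x ^ 2 + y ^ 2))
    (b : ℕ → ℂ) (hbN1 : b (N + 1) = 0) (hbN : b N = a N)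
    (hb : ∀ n, 1 ≤ n → n ≤ N - 1 →
      b n = a n + (phat : ℂ) * b (n + 1) + (qhat : ℂ) * b (n + 2))
    (hb0 : b 0 = a 0 + (qhat : ℂ) * b 2) :
    ∑ n ∈ range (N + 1), C (a n) * X ^ n
      = (X ^ 2 - C (phat : ℂ) * X - C (qhat : ℂ))
          * ∑ n ∈ Icc 2 N, C (b n) * X ^ (n - 2)
        + C (b 1) * X + C (b 0) := by
  obtain ⟨K, rfl⟩ : ∃ K, N = K + 2 := ⟨N - 2, by omega⟩
  clear hN
  set P : ℂ[X] := C (phat : ℂ) with hP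
  set Q : ℂ[X] := C (qhat : ℂ) with hQ
  -- convert the Icc sum to a range sum
  have hIcc : ∑ n ∈ Icc 2 (K + 2), C (b n) * X ^ (n - 2)
      = ∑ i ∈ range (K + 1), C (b (i + 2)) * X ^ i := by
    rw [show Icc 2 (K + 2) = Ico 2 (K + 3) by rfl, Finset.sum_Ico_eq_sum_range]
    apply Finset.sum_congr rfl
    intro i _
    rw [show 2 + i = i + 2 from by omega, show i + 2 - 2 = i from by omega]
  rw [hIcc]
  -- expand the product on the RHS
  have hRHS : (X ^ 2 - P * X - Q) * ∑ i ∈ range (K + 1), C (b (i + 2)) * X ^ i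
      = (∑ i ∈ range (K + 1), C (b (i + 2)) * X ^ (i + 2))
        - P * (∑ i ∈ range (K + 1), C (b (i + 2)) * X ^ (i + 1))
        - Q * (∑ i ∈ range (K + 1), C (b (i + 2)) * X ^ i) := by
    rw [sub_mul, sub_mul, Finset.mul_sum, Finset.mul_sum, Finset.mul_sum,
      Finset.mul_sum]
    congr 2
    · apply Finset.sum_congr rfl; intro i _; ring
    · apply Finset.sum_congr rfl; intro i _; ring
  rw [hRHS]
  -- split the LHS
  rw [Finset.sum_range_succ' (fun n => C (a n) * X ^ n) (K + 2),
    Finset.sum_range_succ (fun n => C (a (n + 1)) * X ^ (n + 1)) (K + 1)]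
  -- rewrite the middle coefficients using the recurrence
  have hmid : ∑ n ∈ range (K + 1), C (a (n + 1)) * X ^ (n + 1)
      = (∑ n ∈ range (K + 1), C (b (n + 1)) * X ^ (n + 1))
        - P * (∑ n ∈ range (K + 1), C (b (n + 2)) * X ^ (n + 1))
        - Q * (∑ n ∈ range (K + 1), C (b (n + 3)) * X ^ (n + 1)) := by
    rw [Finset.mul_sum, Finset.mul_sum, ← Finset.sum_sub_distrib,
      ← Finset.sum_sub_distrib]
    apply Finset.sum_congr rfl
    intro n hn
    have hn' := Finset.mem_range.mp hn
    have h := hb (n + 1) (by omega) (by omega)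
    have : a (n + 1) = b (n + 1) - (phat : ℂ) * b (n + 2) - (qhat : ℂ) * b (n + 3) := by
      rw [h]; ring
    rw [this]
    simp only [map_sub, map_mul, hP, hQ]
    ring
  rw [hmid]
  -- now split off boundary terms of each range-(K+1) sum
  rw [Finset.sum_range_succ' (fun n => C (b (n + 1)) * X ^ (n + 1)) K,
    Finset.sum_range_succ (fun n => C (b (n + 3)) * X ^ (n + 1)) K,
    Finset.sum_range_succ (fun i => C (b (i + 2)) * X ^ (i + 2)) K,
    Finset.sum_range_succ' (fun i => C (b (i + 2)) * X ^ i) K]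
  simp only [hbN1, hbN, hb0, map_add, map_mul, map_zero]
  ring
end

section
/- Let N ≥ 2, let c_1, …, c_N be complex numbers, let x, y ∈ ℝ with z = x + iy ≠ 0, set t = x/|z|, p̂ = 2x, q̂ = −(x² + y²). Define b_{N+1} = 0, b_N = c_N, and b_n = c_n + p̂·b_{n+1} + q̂·b_{n+2} for n = N−1, …, 1. Then for every n with 1 ≤ n ≤ N, b_n = Σ_{k=n}^{N} c_k · |z|^{k−n} · U_{k−n}(t), where U_m denotes the Chebyshev polynomial of the second kind of degree m. -/
open Finset Complex

/-!
Both `b n` and the right-hand side solve the same second-order backward recurrence with the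
same two terminal values, so they agree. For the right-hand side this is because
`w m = |z|^m U_m(t)` is the impulse response of the recurrence: `w 0 = 1`, `w 1 = p̂` and
`w (m + 2) = p̂ w (m + 1) + q̂ w m`, which is the Chebyshev recurrence multiplied by `|z|^(m+2)`,
using `t |z| = x` and `|z|² = x² + y²`.
-/

section BackwardRecurrence

variable {R : Type*} [CommRing R] {p q : R} {w : ℕ → R}

def backwardSum (c w : ℕ → R) (N n : ℕ) : R :=
  ∑ k ∈ Icc n N, c k * w (k - n)

lemma backwardSum_of_lt (c w : ℕ → R) {N n : ℕ} (h : N < n) : backwardSum c w N n = 0 := by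
  simp [backwardSum, Icc_eq_empty_of_lt h]

lemma backwardSum_self (c w : ℕ → R) (N : ℕ) : backwardSum c w N N = c N * w 0 := by
  simp [backwardSum]

lemma backwardSum_eq_add (c w : ℕ → R) {N n : ℕ} (hn : n ≤ N) :
    backwardSum c w N n = c n * w 0 + ∑ k ∈ Icc (n + 1) N, c k * w (k - n) := by
  rw [backwardSum, ← insert_Icc_add_one_left_eq_Icc hn, sum_insert (by simp), Nat.sub_self]

lemma backwardSum_recurrence (hw0 : w 0 = 1) (hw1 : w 1 = p)
    (hw : ∀ m, w (m + 2) = p * w (m + 1) + q * w m) (c : ℕ → R) {N n : ℕ} (hn : n < N) :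
    backwardSum c w N n
      = c n + p * backwardSum c w N (n + 1) + q * backwardSum c w N (n + 2) := by
  have hhead : ∑ k ∈ Icc (n + 1) N, c k * w (k - n)
      = c (n + 1) * p + ∑ k ∈ Icc (n + 2) N, c k * w (k - n) := by
    rw [← insert_Icc_add_one_left_eq_Icc hn, sum_insert (by simp), Nat.add_sub_cancel_left, hw1]
    rfl
  have htail : ∑ k ∈ Icc (n + 2) N, c k * w (k - n)
      = ∑ k ∈ Icc (n + 2) N, (p * (c k * w (k - (n + 1))) + q * (c k * w (k - (n + 2)))) := by
    refine sum_congr rfl fun k hk => ?_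
    obtain ⟨m, rfl⟩ : ∃ m, k = m + 2 + n := ⟨k - (n + 2), by grind⟩
    rw [show m + 2 + n - n = m + 2 by omega, show m + 2 + n - (n + 1) = m + 1 by omega,
      show m + 2 + n - (n + 2) = m by omega, hw]
    ring
  rw [backwardSum_eq_add c w hn.le, backwardSum_eq_add c w hn, hhead, htail, sum_add_distrib,
    ← mul_sum, ← mul_sum, backwardSum, hw0]
  ring

theorem eq_backwardSum_of_recurrence (hw0 : w 0 = 1) (hw1 : w 1 = p)
    (hw : ∀ m, w (m + 2) = p * w (m + 1) + q * w m) {c b : ℕ → R} {N n₀ : ℕ}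
    (hbN1 : b (N + 1) = 0) (hbN : b N = c N)
    (hb : ∀ n, n₀ ≤ n → n < N → b n = c n + p * b (n + 1) + q * b (n + 2))
    {n : ℕ} (hn₀ : n₀ ≤ n) (hnN : n ≤ N) : b n = backwardSum c w N n := by
  refine (Nat.decreasingInduction' (P := fun k => b k = backwardSum c w N k ∧
    b (k + 1) = backwardSum c w N (k + 1)) (fun k hkN hnk ih => ⟨?_, ih.1⟩) hnN ?_).1
  · rw [hb k (hn₀.trans hnk) hkN, ih.1, ih.2, backwardSum_recurrence hw0 hw1 hw c hkN]
  · rw [backwardSum_self, hw0, mul_one, backwardSum_of_lt c w (Nat.lt_succ_self N)]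
    exact ⟨hbN, hbN1⟩

end BackwardRecurrence

lemma pow_mul_eval_U_add_two {R : Type*} [CommRing R] (r t : R) (m : ℕ) :
    r ^ (m + 2) * (Polynomial.Chebyshev.U R (m + 2 : ℕ)).eval t
      = 2 * (t * r) * (r ^ (m + 1) * (Polynomial.Chebyshev.U R (m + 1 : ℕ)).eval t)
        - r ^ 2 * (r ^ m * (Polynomial.Chebyshev.U R m).eval t) := by
  push_cast
  rw [Polynomial.Chebyshev.U_add_two]
  simp only [Polynomial.eval_sub, Polynomial.eval_mul, Polynomial.eval_ofNat, Polynomial.eval_X]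
  ring

lemma div_norm_mul_norm (z : ℂ) : z.re / ‖z‖ * ‖z‖ = z.re :=
  div_mul_cancel_of_imp fun h => by simp [norm_eq_zero.mp h]

theorem goertzel_b_chebyshev_general (N : ℕ) (c : ℕ → ℂ) (x y : ℝ) (z : ℂ)
    (hz : z = (x : ℂ) + (y : ℂ) * I)
    (t : ℝ) (ht : t = x / ‖z‖)
    (phat qhat : ℝ) (hp : phat = 2 * x) (hq : qhat = -(x ^ 2 + y ^ 2))
    (b : ℕ → ℂ) (hbN1 : b (N + 1) = 0) (hbN : b N = c N)
    (hb : ∀ n, 1 ≤ n → n ≤ N - 1 →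
      b n = c n + (phat : ℂ) * b (n + 1) + (qhat : ℂ) * b (n + 2)) :
    ∀ n, 1 ≤ n → n ≤ N →
      b n = ∑ k ∈ Icc n N,
        c k * ((‖z‖ ^ (k - n) : ℝ) : ℂ)
          * (((Polynomial.Chebyshev.U ℝ (k - n : ℕ)).eval t : ℝ) : ℂ) := by
  intro n hn hnN
  have htr : t * ‖z‖ = x := by
    have hre : z.re = x := by simp [hz]
    rw [ht, ← hre, div_norm_mul_norm]
  have hr2 : ‖z‖ ^ 2 = x ^ 2 + y ^ 2 := by
    rw [hz, ← normSq_add_mul_I, Complex.sq_norm]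
  let w : ℕ → ℂ := fun m => ((‖z‖ ^ m * (Polynomial.Chebyshev.U ℝ m).eval t : ℝ) : ℂ)
  have hw : ∀ m, w (m + 2) = phat * w (m + 1) + qhat * w m := fun m => by
    simp only [w]
    rw [pow_mul_eval_U_add_two, htr, hr2, hp, hq]
    push_cast
    ring
  have hsum := eq_backwardSum_of_recurrence (w := w) (by simp [w]) (by simp [w, hp, ← htr]; ring)
    hw hbN1 hbN (fun k hk hkN => hb k hk (by omega)) hn hnN
  simpa [backwardSum, w, mul_assoc] using hsum

/-- Chebyshev representation of the Goertzel backward recurrence: with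
`t = x / |z|`, one has `b n = ∑_{k=n}^{N} c k * |z|^(k-n) * U_(k-n)(t)`,
where `U` is the Chebyshev polynomial of the second kind. -/
theorem goertzel_b_chebyshev (N : ℕ) (hN : 2 ≤ N) (c : ℕ → ℂ) (x y : ℝ) (z : ℂ)
    (hz : z = (x : ℂ) + (y : ℂ) * I) (hz0 : z ≠ 0)
    (t : ℝ) (ht : t = x / ‖z‖)
    (phat qhat : ℝ) (hp : phat = 2 * x) (hq : qhat = -(x ^ 2 + y ^ 2))
    (b : ℕ → ℂ) (hbN1 : b (N + 1) = 0) (hbN : b N = c N)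
    (hb : ∀ n, 1 ≤ n → n ≤ N - 1 →
      b n = c n + (phat : ℂ) * b (n + 1) + (qhat : ℂ) * b (n + 2)) :
    ∀ n, 1 ≤ n → n ≤ N →
      b n = ∑ k ∈ Icc n N,
        c k * ((‖z‖ ^ (k - n) : ℝ) : ℂ)
          * (((Polynomial.Chebyshev.U ℝ (k - n : ℕ)).eval t : ℝ) : ℂ) :=
  goertzel_b_chebyshev_general N c x y z hz t ht phat qhat hp hq b hbN1 hbN hb
end

section
/- Let N ≥ 2, let a_0, …, a_N be complex numbers, let x, y ∈ ℝ with z = x + iy ≠ 0, set p̂ = 2x, q̂ = −(x² + y²). Define b_{N+1} = 0, b_N = a_N, b_n = a_n + p̂·b_{n+1} + q̂·b_{n+2} for n = N−1, …, 1, and let g_n = Σ_{k=n}^{N} |a_k|·|z|^{k−n}. Then for every n with 1 ≤ n ≤ N, |b_n| ≤ (N − n + 1)·g_n. -/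
/-!
The characteristic roots of the recurrence `t² = p̂ t + q̂` are `z` and `conj z`, so the backward
recurrence is solved by `b n = ∑_{j ≤ N - n} a (n + j) U (j + 1)`, where `U` is the fundamental
solution `U (m + 1) = ∑_{i ≤ m} z^i (conj z)^(m - i)` (this is `|z|^m U_m(x / |z|)` for the
Chebyshev polynomial `U_m`). Each of the `m + 1` terms of `U (m + 1)` has modulus `|z|^m`, and
`j + 1 ≤ N - n + 1`.
-/

open Finset Complex ComplexConjugate

/-- The Lucas sequence `U(p, -q)`: `q` enters with a plus sign, as in the Goertzel recurrence. -/
def lucasU {R : Type*} [CommRing R] (p q : R) : ℕ → R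
  | 0 => 0
  | 1 => 1
  | m + 2 => p * lucasU p q (m + 1) + q * lucasU p q m

section CommRing

variable {R : Type*} [CommRing R]

theorem lucasU_eq_geom_sum₂ (u v : R) (m : ℕ) :
    lucasU (u + v) (-(u * v)) m = ∑ i ∈ range m, u ^ i * v ^ (m - 1 - i) := by
  induction m using Nat.twoStepInduction with
  | zero => simp [lucasU]
  | one => simp [lucasU]
  | more m ih₀ ih₁ =>
    have h₁ := geom_sum₂_succ_eq u v (n := m + 1)
    have h₀ := geom_sum₂_succ_eq u v (n := m)
    simp only [Nat.add_sub_cancel] at h₀ h₁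
    rw [lucasU, ih₀, ih₁, Nat.add_sub_cancel]
    change _ = ∑ i ∈ range (m + 1 + 1), u ^ i * v ^ (m + 1 - i)
    rw [h₁, h₀]
    ring

theorem sum_mul_lucasU_add_two (p q : R) (a : ℕ → R) (L : ℕ) :
    ∑ j ∈ range (L + 2), a j * lucasU p q (j + 1) =
      a 0 + p * ∑ j ∈ range (L + 1), a (j + 1) * lucasU p q (j + 1)
        + q * ∑ j ∈ range L, a (j + 2) * lucasU p q (j + 1) := by
  have hq : ∑ j ∈ range L, a (j + 2) * lucasU p q (j + 1) =
      ∑ j ∈ range (L + 1), a (j + 1) * lucasU p q j := by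
    rw [sum_range_succ' _ L]
    simp [lucasU]
  rw [hq, sum_range_succ', mul_sum, mul_sum, add_assoc, ← sum_add_distrib, add_comm]
  simp only [lucasU, mul_one]
  congr 1
  exact sum_congr rfl fun j _ => by ring

theorem eq_sum_mul_lucasU_of_backward_rec (p q : R) (N : ℕ) (a b : ℕ → R)
    (hbN1 : b (N + 1) = 0) (hbN : b N = a N)
    (hb : ∀ n, 1 ≤ n → n ≤ N - 1 → b n = a n + p * b (n + 1) + q * b (n + 2))
    {n : ℕ} (hn : 1 ≤ n) (hnN : n ≤ N + 1) :
    b n = ∑ j ∈ range (N + 1 - n), a (n + j) * lucasU p q (j + 1) := by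
  suffices ∀ L n, 1 ≤ n → n + L = N + 1 →
      b n = ∑ j ∈ range L, a (n + j) * lucasU p q (j + 1) from
    this _ n hn (by omega)
  intro L
  induction L using Nat.twoStepInduction with
  | zero => intro n _ h; simp [show n = N + 1 by omega, hbN1]
  | one => intro n _ h; simp [show n = N by omega, hbN, lucasU]
  | more L ih₀ ih₁ =>
    intro n hn h
    rw [hb n hn (by omega), ih₁ (n + 1) (by omega) (by omega), ih₀ (n + 2) (by omega) (by omega),
      sum_mul_lucasU_add_two]
    simp only [add_zero, add_assoc, Nat.add_comm 1, Nat.add_comm 2]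

end CommRing

theorem norm_geom_sum₂_le {R : Type*} [SeminormedRing R] [NormOneClass R] {u v : R} {r : ℝ}
    (hu : ‖u‖ ≤ r) (hv : ‖v‖ ≤ r) (m : ℕ) :
    ‖∑ i ∈ range m, u ^ i * v ^ (m - 1 - i)‖ ≤ m * r ^ (m - 1) := by
  have hr : 0 ≤ r := (norm_nonneg u).trans hu
  calc ‖∑ i ∈ range m, u ^ i * v ^ (m - 1 - i)‖
      ≤ ∑ i ∈ range m, r ^ i * r ^ (m - 1 - i) := by
        refine (norm_sum_le _ _).trans (sum_le_sum fun i _ => (norm_mul_le _ _).trans ?_)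
        gcongr <;> exact (norm_pow_le _ _).trans (by gcongr)
    _ = ∑ i ∈ range m, r ^ (m - 1) := sum_congr rfl fun i hi => by
        rw [← pow_add, Nat.add_sub_cancel' (by have := mem_range.mp hi; omega)]
    _ = m * r ^ (m - 1) := by rw [sum_const, card_range, nsmul_eq_mul]

theorem norm_sum_mul_lucasU_le {R : Type*} [SeminormedCommRing R] [NormOneClass R]
    {u v : R} {r : ℝ} (hu : ‖u‖ ≤ r) (hv : ‖v‖ ≤ r) (c : ℕ → R) (L : ℕ) :
    ‖∑ j ∈ range L, c j * lucasU (u + v) (-(u * v)) (j + 1)‖ ≤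
      L * ∑ j ∈ range L, ‖c j‖ * r ^ j := by
  have hr : 0 ≤ r := (norm_nonneg u).trans hu
  rw [mul_sum]
  refine (norm_sum_le _ _).trans (sum_le_sum fun j hj => (norm_mul_le _ _).trans ?_)
  have hjL : (j + 1 : ℝ) ≤ L := by norm_cast; simpa using hj
  have hU := norm_geom_sum₂_le hu hv (j + 1)
  rw [← lucasU_eq_geom_sum₂, Nat.add_sub_cancel] at hU
  calc ‖c j‖ * ‖lucasU (u + v) (-(u * v)) (j + 1)‖ ≤ ‖c j‖ * ((j + 1 : ℕ) * r ^ j) := by gcongr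
    _ ≤ L * (‖c j‖ * r ^ j) := by
        rw [mul_left_comm]; push_cast; gcongr

theorem goertzel_b_bound_general (N : ℕ) (a : ℕ → ℂ) (x y : ℝ) (z : ℂ)
    (hz : z = (x : ℂ) + (y : ℂ) * I)
    (phat qhat : ℝ) (hp : phat = 2 * x) (hq : qhat = -(x ^ 2 + y ^ 2))
    (b : ℕ → ℂ) (hbN1 : b (N + 1) = 0) (hbN : b N = a N)
    (hb : ∀ n, 1 ≤ n → n ≤ N - 1 →
      b n = a n + (phat : ℂ) * b (n + 1) + (qhat : ℂ) * b (n + 2))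
    (g : ℕ → ℝ)
    (hg : ∀ n ≤ N, g n = ∑ k ∈ Icc n N, ‖a k‖ * ‖z‖ ^ (k - n)) :
    ∀ n, 1 ≤ n → n ≤ N → ‖b n‖ ≤ (N - n + 1 : ℕ) * g n := by
  intro n hn hnN
  have hp' : (phat : ℂ) = z + conj z := by
    rw [add_conj, hp, hz]; simp
  have hq' : (qhat : ℂ) = -(z * conj z) := by
    rw [mul_conj, hq, hz, normSq_add_mul_I]; push_cast; ring
  have hg' : g n = ∑ j ∈ range (N + 1 - n), ‖a (n + j)‖ * ‖z‖ ^ j := by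
    rw [hg n hnN, ← Ico_add_one_right_eq_Icc, sum_Ico_eq_sum_range]
    simp only [Nat.add_sub_cancel_left]
  rw [eq_sum_mul_lucasU_of_backward_rec _ _ N a b hbN1 hbN hb hn (by omega), hp', hq', hg',
    Nat.sub_add_comm hnN]
  exact norm_sum_mul_lucasU_le le_rfl (norm_conj z).le _ _

/-- Bound on the Goertzel backward recurrence: with
`g n = ∑_{k=n}^{N} |a k| * |z|^(k-n)`, one has `|b n| ≤ (N - n + 1) * g n`
for `1 ≤ n ≤ N`. -/
theorem goertzel_b_bound (N : ℕ) (hN : 2 ≤ N) (a : ℕ → ℂ) (x y : ℝ) (z : ℂ)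
    (hz : z = (x : ℂ) + (y : ℂ) * I) (hz0 : z ≠ 0)
    (phat qhat : ℝ) (hp : phat = 2 * x) (hq : qhat = -(x ^ 2 + y ^ 2))
    (b : ℕ → ℂ) (hbN1 : b (N + 1) = 0) (hbN : b N = a N)
    (hb : ∀ n, 1 ≤ n → n ≤ N - 1 →
      b n = a n + (phat : ℂ) * b (n + 1) + (qhat : ℂ) * b (n + 2))
    (g : ℕ → ℝ)
    (hg : ∀ n ≤ N, g n = ∑ k ∈ Icc n N, ‖a k‖ * ‖z‖ ^ (k - n)) :
    ∀ n, 1 ≤ n → n ≤ N → ‖b n‖ ≤ (N - n + 1 : ℕ) * g n :=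
  goertzel_b_bound_general N a x y z hz phat qhat hp hq b hbN1 hbN hb g hg
end

section
/- Let N ≥ 2, let a_0, …, a_N be complex numbers, let x, y ∈ ℝ with z = x + iy ≠ 0, set p̂ = 2x, q̂ = −(x² + y²). Define b_{N+1} = 0, b_N = a_N, b_n = a_n + p̂·b_{n+1} + q̂·b_{n+2} for n = N−1, …, 1, and u = a_0 + x·b_1 + q̂·b_2. Then |u| ≤ Σ_{k=0}^{N} |a_k|·|z|^k. -/
open Finset Complex ComplexConjugate

/-! With `c k = Re (z ^ k)` one has `c 0 = 1`, `c 1 = x` and `c (k + 2) = p̂ c (k + 1) + q̂ c k`,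
since `z` and `conj z` are the roots of `t ^ 2 = p̂ t + q̂`. Clenshaw's summation identity for the
backward recurrence then gives `u = ∑ a k * c k`, and `|c k| ≤ |z| ^ k`. -/

section Clenshaw

variable {R : Type*} [CommRing R] {N : ℕ} {a b c : ℕ → R} {p q : R}

theorem clenshaw_sum_Ico (hc : ∀ k, c (k + 2) = p * c (k + 1) + q * c k)
    (hbN1 : b (N + 1) = 0) (hbN : b N = a N)
    (hb : ∀ n, 1 ≤ n → n < N → b n = a n + p * b (n + 1) + q * b (n + 2))
    {m : ℕ} (hm : m < N) :
    ∑ k ∈ Ico (m + 1) (N + 1), a k * c k = c (m + 1) * b (m + 1) + q * c m * b (m + 2) := by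
  induction hd : N - (m + 1) generalizing m with
  | zero =>
    obtain rfl : N = m + 1 := by omega
    rw [Nat.Ico_succ_singleton, sum_singleton, hbN1, hbN]
    ring
  | succ d ih =>
    rw [sum_eq_sum_Ico_succ_bot (by omega), ih (by omega) (by omega),
      hb (m + 1) (by omega) (by omega), hc m]
    ring

theorem clenshaw_sum_range (hc : ∀ k, c (k + 2) = p * c (k + 1) + q * c k)
    (hbN1 : b (N + 1) = 0) (hbN : b N = a N)
    (hb : ∀ n, 1 ≤ n → n < N → b n = a n + p * b (n + 1) + q * b (n + 2)) (hN : 1 ≤ N) :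
    ∑ k ∈ range (N + 1), a k * c k = a 0 * c 0 + c 1 * b 1 + q * c 0 * b 2 := by
  rw [sum_range_eq_add_Ico _ N.succ_pos, clenshaw_sum_Ico hc hbN1 hbN hb hN]
  ring

end Clenshaw

theorem Complex.re_pow_add_two (z : ℂ) (k : ℕ) :
    (z ^ (k + 2)).re = 2 * z.re * (z ^ (k + 1)).re - normSq z * (z ^ k).re := by
  have hsq : z ^ (k + 2) = (z + conj z) * z ^ (k + 1) - z * conj z * z ^ k := by ring
  rw [hsq, add_conj, mul_conj, sub_re, re_ofReal_mul, re_ofReal_mul]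

theorem norm_sum_mul_re_pow_le (s : Finset ℕ) (a : ℕ → ℂ) (z : ℂ) :
    ‖∑ k ∈ s, a k * ((z ^ k).re : ℂ)‖ ≤ ∑ k ∈ s, ‖a k‖ * ‖z‖ ^ k := by
  refine (norm_sum_le _ _).trans (sum_le_sum fun k _ => ?_)
  rw [norm_mul, norm_real, Real.norm_eq_abs, ← norm_pow]
  gcongr
  exact abs_re_le_norm _

theorem goertzel_u_bound_general (N : ℕ) (hN : 2 ≤ N) (a : ℕ → ℂ) (x y : ℝ) (z : ℂ)
    (hz : z = (x : ℂ) + (y : ℂ) * I)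
    (phat qhat : ℝ) (hp : phat = 2 * x) (hq : qhat = -(x ^ 2 + y ^ 2))
    (b : ℕ → ℂ) (hbN1 : b (N + 1) = 0) (hbN : b N = a N)
    (hb : ∀ n, 1 ≤ n → n ≤ N - 1 →
      b n = a n + (phat : ℂ) * b (n + 1) + (qhat : ℂ) * b (n + 2))
    (u : ℂ) (hu : u = a 0 + (x : ℂ) * b 1 + (qhat : ℂ) * b 2) :
    ‖u‖ ≤ ∑ k ∈ range (N + 1), ‖a k‖ * ‖z‖ ^ k := by
  have hre : z.re = x := by simp [hz]
  have hnormSq : normSq z = x ^ 2 + y ^ 2 := hz ▸ normSq_add_mul_I x y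
  have hc : ∀ k, ((z ^ (k + 2)).re : ℂ) =
      phat * ((z ^ (k + 1)).re : ℂ) + qhat * ((z ^ k).re : ℂ) := fun k => by
    rw [re_pow_add_two, hre, hnormSq, hp, hq]
    push_cast
    ring
  have hsum : u = ∑ k ∈ range (N + 1), a k * ((z ^ k).re : ℂ) := by
    rw [clenshaw_sum_range hc hbN1 hbN (fun n h1 h2 => hb n h1 (by omega)) (by omega), hu]
    simp [hre]
  exact hsum ▸ norm_sum_mul_re_pow_le _ a z

/-- Bound on the real-part output of Goertzel's algorithm:
`|u| ≤ ∑_{k=0}^{N} |a k| * |z|^k`. -/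
theorem goertzel_u_bound (N : ℕ) (hN : 2 ≤ N) (a : ℕ → ℂ) (x y : ℝ) (z : ℂ)
    (hz : z = (x : ℂ) + (y : ℂ) * I) (hz0 : z ≠ 0)
    (phat qhat : ℝ) (hp : phat = 2 * x) (hq : qhat = -(x ^ 2 + y ^ 2))
    (b : ℕ → ℂ) (hbN1 : b (N + 1) = 0) (hbN : b N = a N)
    (hb : ∀ n, 1 ≤ n → n ≤ N - 1 →
      b n = a n + (phat : ℂ) * b (n + 1) + (qhat : ℂ) * b (n + 2))
    (u : ℂ) (hu : u = a 0 + (x : ℂ) * b 1 + (qhat : ℂ) * b 2) :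
    ‖u‖ ≤ ∑ k ∈ range (N + 1), ‖a k‖ * ‖z‖ ^ k :=
  goertzel_u_bound_general N hN a x y z hz phat qhat hp hq b hbN1 hbN hb u hu
end

section
/- Let N ≥ 2, let η_1, …, η_{N−1} be complex numbers (set η_N = 0), let x, y ∈ ℝ with z = x + iy ≠ 0, set p̂ = 2x and q̂ = −(x² + y²), and let a_0, …, a_N be complex numbers. Define b_{N+1} = 0, b_N = a_N, b_n = a_n + p̂ b_{n+1} + q̂ b_{n+2} for n = N−1, …, 1, and the perturbed sequence b̃_{N+1} = 0, b̃_N = a_N, b̃_n = (a_n + η_n) + p̂ b̃_{n+1} + q̂ b̃_{n+2} for n = N−1, …, 1. Then for every n with 1 ≤ n ≤ N, |b̃_n − b_n| ≤ (N − n + 1)·Σ_{k=n}^{N} |η_k|·|z|^{k−n}. -/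
open Finset Complex
open scoped ComplexConjugate

/-!
Since `p̂ = z + z̄` and `q̂ = -z z̄`, the error `e = b̃ - b` obeys
`e n = η n + (z + z̄) e (n+1) - z z̄ e (n+2)`, which factors into two first-order Horner
recurrences: `f n := e n - z e (n+1)` satisfies `f n = η n + z̄ f (n+1)`, and
`e n = f n + z e (n+1)`. Bounding each Horner sum termwise gives
`‖e n‖ ≤ ∑_{k=n}^N ∑_{l=k}^N ‖η l‖ |z|^(l-n)`; enlarging every inner range to `[n, N]`
produces the factor `N - n + 1`. Composing the two Horner sums is exactly the
representation of `e n` through `|z|^m U_m(x/|z|) = ∑_{j=0}^m z^j z̄^(m-j)`.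
-/

theorem eq_sum_Icc_mul_pow_of_backward_recurrence {R : Type*} [CommSemiring R]
    {f g : ℕ → R} {v : R} {n₀ N : ℕ} (hN : f N = g N)
    (hf : ∀ n, n₀ ≤ n → n < N → f n = g n + v * f (n + 1)) {n : ℕ} (hn₀ : n₀ ≤ n)
    (hn : n ≤ N) : f n = ∑ k ∈ Icc n N, g k * v ^ (k - n) := by
  induction hn using Nat.decreasingInduction with
  | self => simp [hN]
  | of_succ n hnN ih =>
    rw [hf n hn₀ hnN, ih (by omega), ← add_sum_Ioc_eq_sum_Icc hnN.le, Icc_add_one_left_eq_Ioc,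
      mul_sum, Nat.sub_self, pow_zero, mul_one]
    congr 1
    refine sum_congr rfl fun k hk => ?_
    rw [mul_left_comm, ← pow_succ', Nat.sub_add_eq, Nat.sub_add_cancel (Nat.sub_pos_of_lt (mem_Ioc.1 hk).1)]

theorem norm_le_sum_Icc_of_backward_recurrence {R : Type*} [NormedCommRing R] [NormOneClass R]
    {f g : ℕ → R} {v : R} {r : ℝ} {n₀ N : ℕ} (hN : f N = g N)
    (hf : ∀ n, n₀ ≤ n → n < N → f n = g n + v * f (n + 1)) (hv : ‖v‖ ≤ r) {n : ℕ}
    (hn₀ : n₀ ≤ n) (hn : n ≤ N) : ‖f n‖ ≤ ∑ k ∈ Icc n N, ‖g k‖ * r ^ (k - n) := by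
  rw [eq_sum_Icc_mul_pow_of_backward_recurrence hN hf hn₀ hn]
  refine (norm_sum_le _ _).trans (sum_le_sum fun k _ => ?_)
  calc ‖g k * v ^ (k - n)‖ ≤ ‖g k‖ * ‖v‖ ^ (k - n) :=
        (norm_mul_le _ _).trans (by gcongr; exact norm_pow_le _ _)
    _ ≤ ‖g k‖ * r ^ (k - n) := by gcongr

theorem sum_Icc_mul_pow_mul_pow_le {a : ℕ → ℝ} {r : ℝ} (ha : ∀ k, 0 ≤ a k) (hr : 0 ≤ r)
    {n k N : ℕ} (hnk : n ≤ k) :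
    (∑ l ∈ Icc k N, a l * r ^ (l - k)) * r ^ (k - n) ≤ ∑ l ∈ Icc n N, a l * r ^ (l - n) := by
  rw [sum_mul]
  calc ∑ l ∈ Icc k N, a l * r ^ (l - k) * r ^ (k - n) = ∑ l ∈ Icc k N, a l * r ^ (l - n) := by
        refine sum_congr rfl fun l hl => ?_
        rw [mul_assoc, ← pow_add, Nat.sub_add_sub_cancel (mem_Icc.1 hl).1 hnk]
    _ ≤ ∑ l ∈ Icc n N, a l * r ^ (l - n) :=
        sum_le_sum_of_subset_of_nonneg (Icc_subset_Icc_left hnk)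
          fun l _ _ => mul_nonneg (ha l) (pow_nonneg hr _)

theorem norm_le_card_mul_sum_Icc_of_backward_recurrence₂ {R : Type*} [NormedCommRing R]
    [NormOneClass R] {e η : ℕ → R} {u v : R} {r : ℝ} {n₀ N : ℕ} (hN₁ : e (N + 1) = 0)
    (hN : e N = η N)
    (he : ∀ n, n₀ ≤ n → n < N → e n = η n + (u + v) * e (n + 1) - u * v * e (n + 2))
    (hu : ‖u‖ ≤ r) (hv : ‖v‖ ≤ r) {n : ℕ} (hn₀ : n₀ ≤ n) (hn : n ≤ N) :
    ‖e n‖ ≤ (N - n + 1 : ℕ) * ∑ k ∈ Icc n N, ‖η k‖ * r ^ (k - n) := by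
  have hr : 0 ≤ r := (norm_nonneg u).trans hu
  set f : ℕ → R := fun n => e n - u * e (n + 1)
  have hfN : f N = η N := by simp [f, hN₁, hN]
  have hf : ∀ n, n₀ ≤ n → n < N → f n = η n + v * f (n + 1) := fun n h₀ h => by
    simp only [f]; rw [he n h₀ h]; ring
  have heN : e N = f N := by simp [f, hN₁]
  have he' : ∀ n, n₀ ≤ n → n < N → e n = f n + u * e (n + 1) := fun n _ _ => by simp [f]
  calc ‖e n‖ ≤ ∑ k ∈ Icc n N, ‖f k‖ * r ^ (k - n) :=
        norm_le_sum_Icc_of_backward_recurrence heN he' hu hn₀ hn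
    _ ≤ ∑ k ∈ Icc n N, (∑ l ∈ Icc k N, ‖η l‖ * r ^ (l - k)) * r ^ (k - n) := by
        refine sum_le_sum fun k hk => ?_
        have hk := mem_Icc.1 hk
        gcongr
        exact norm_le_sum_Icc_of_backward_recurrence hfN hf hv (hn₀.trans hk.1) hk.2
    _ ≤ ∑ k ∈ Icc n N, ∑ l ∈ Icc n N, ‖η l‖ * r ^ (l - n) :=
        sum_le_sum fun k hk =>
          sum_Icc_mul_pow_mul_pow_le (fun _ => norm_nonneg _) hr (mem_Icc.1 hk).1
    _ = (N - n + 1 : ℕ) * ∑ k ∈ Icc n N, ‖η k‖ * r ^ (k - n) := by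
        rw [sum_const, Nat.card_Icc, nsmul_eq_mul, Nat.sub_add_comm hn]

theorem goertzel_perturbation_bound_general (N : ℕ) (a η : ℕ → ℂ)
    (hηN : η N = 0) (x y : ℝ) (z : ℂ)
    (hz : z = (x : ℂ) + (y : ℂ) * I)
    (phat qhat : ℝ) (hp : phat = 2 * x) (hq : qhat = -(x ^ 2 + y ^ 2))
    (b : ℕ → ℂ) (hbN1 : b (N + 1) = 0) (hbN : b N = a N)
    (hb : ∀ n, 1 ≤ n → n ≤ N - 1 →
      b n = a n + (phat : ℂ) * b (n + 1) + (qhat : ℂ) * b (n + 2))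
    (bt : ℕ → ℂ) (hbtN1 : bt (N + 1) = 0) (hbtN : bt N = a N)
    (hbt : ∀ n, 1 ≤ n → n ≤ N - 1 →
      bt n = (a n + η n) + (phat : ℂ) * bt (n + 1) + (qhat : ℂ) * bt (n + 2)) :
    ∀ n, 1 ≤ n → n ≤ N →
      ‖bt n - b n‖
        ≤ (N - n + 1 : ℕ) * ∑ k ∈ Icc n N, ‖η k‖ * ‖z‖ ^ (k - n) := by
  have hpz : (phat : ℂ) = z + conj z := by
    rw [add_conj, hz, hp]; simp
  have hqz : (qhat : ℂ) = -(z * conj z) := by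
    rw [mul_conj, normSq_apply, hz, hq]; simp [sq]
  intro n hn₁ hn
  refine norm_le_card_mul_sum_Icc_of_backward_recurrence₂ (e := bt - b) (u := z) (v := conj z)
    (n₀ := 1) (by simp [hbtN1, hbN1]) (by simp [hbtN, hbN, hηN]) (fun k hk₁ hk => ?_)
    le_rfl (norm_conj z).le hn₁ hn
  simp only [Pi.sub_apply]
  rw [hbt k hk₁ (by omega), hb k hk₁ (by omega), hpz, hqz]
  ring

/-- Perturbation bound for the Goertzel backward recurrence: if `b̃` is run
with the perturbed coefficients `a n + η n` (with `η N = 0`), then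
`|b̃ n - b n| ≤ (N - n + 1) * ∑_{k=n}^{N} |η k| * |z|^(k-n)` for `1 ≤ n ≤ N`. -/
theorem goertzel_perturbation_bound (N : ℕ) (hN : 2 ≤ N) (a η : ℕ → ℂ)
    (hηN : η N = 0) (x y : ℝ) (z : ℂ)
    (hz : z = (x : ℂ) + (y : ℂ) * I) (hz0 : z ≠ 0)
    (phat qhat : ℝ) (hp : phat = 2 * x) (hq : qhat = -(x ^ 2 + y ^ 2))
    (b : ℕ → ℂ) (hbN1 : b (N + 1) = 0) (hbN : b N = a N)
    (hb : ∀ n, 1 ≤ n → n ≤ N - 1 →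
      b n = a n + (phat : ℂ) * b (n + 1) + (qhat : ℂ) * b (n + 2))
    (bt : ℕ → ℂ) (hbtN1 : bt (N + 1) = 0) (hbtN : bt N = a N)
    (hbt : ∀ n, 1 ≤ n → n ≤ N - 1 →
      bt n = (a n + η n) + (phat : ℂ) * bt (n + 1) + (qhat : ℂ) * bt (n + 2)) :
    ∀ n, 1 ≤ n → n ≤ N →
      ‖bt n - b n‖
        ≤ (N - n + 1 : ℕ) * ∑ k ∈ Icc n N, ‖η k‖ * ‖z‖ ^ (k - n) :=
  goertzel_perturbation_bound_general N a η hηN x y z hz phat qhat hp hq b hbN1 hbN hb bt hbtN1 hbtN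
    hbt
end

section
/- Let N ≥ 2, let a_0, …, a_N and η_0, …, η_{N−1} be complex numbers (set η_N = 0), let x, y ∈ ℝ with z = x + iy, set p̂ = 2x and q̂ = −(x² + y²). Define b̃_{N+1} = 0, b̃_N = a_N, b̃_n = (a_n + η_n) + p̂ b̃_{n+1} + q̂ b̃_{n+2} for n = N−1, …, 1, and ũ = (a_0 + η_0) + x·b̃_1 + q̂·b̃_2. Then ũ + i·y·b̃_1 = Σ_{k=0}^{N} (a_k + η_k)·z^k; that is, the perturbed Goertzel process computes exactly the value at z of the polynomial with coefficients a_k + η_k. -/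
open Finset Complex

/-- Backward-error identity for the perturbed Goertzel process: running the
backward recurrence with the perturbed coefficients `a n + η n` (with
`η N = 0`) computes exactly `∑_{k=0}^{N} (a k + η k) * z^k`. -/
theorem goertzel_backward_error (N : ℕ) (hN : 2 ≤ N) (a η : ℕ → ℂ)
    (hηN : η N = 0) (x y : ℝ) (z : ℂ) (hz : z = (x : ℂ) + (y : ℂ) * I)
    (phat qhat : ℝ) (hp : phat = 2 * x) (hq : qhat = -(x ^ 2 + y ^ 2))
    (bt : ℕ → ℂ) (hbtN1 : bt (N + 1) = 0) (hbtN : bt N = a N)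
    (hbt : ∀ n, 1 ≤ n → n ≤ N - 1 →
      bt n = (a n + η n) + (phat : ℂ) * bt (n + 1) + (qhat : ℂ) * bt (n + 2))
    (ut : ℂ) (hut : ut = (a 0 + η 0) + (x : ℂ) * bt 1 + (qhat : ℂ) * bt 2) :
    ut + I * (y : ℂ) * bt 1 = ∑ k ∈ range (N + 1), (a k + η k) * z ^ k := by
  set w : ℂ := (x : ℂ) - (y : ℂ) * I with hw
  have hzw : z * w = ((x ^ 2 + y ^ 2 : ℝ) : ℂ) := by
    rw [hz, hw]; push_cast; ring_nf; rw [Complex.I_sq]; ring_nf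
  have hpz : (phat : ℂ) = z + w := by
    simp [hp, hz, hw]; ring_nf
  have hqz : (qhat : ℂ) = -(z * w) := by
    rw [hzw, hq]; push_cast; ring_nf
  have key : ∀ m, m ≤ N - 1 →
      ∑ k ∈ range (m + 1), (a (N - m + k) + η (N - m + k)) * z ^ k
        = bt (N - m) - w * bt (N - m + 1) := by
    intro m
    induction m with
    | zero => intro _; simp [hηN, hbtN, hbtN1]
    | succ m ih =>
      intro hm1
      have hm : m ≤ N - 1 := Nat.le_of_succ_le hm1
      have hmN : m + 1 ≤ N := le_trans hm1 (Nat.sub_le N 1)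
      have hn1 : 1 ≤ N - (m + 1) := by omega
      have hn2 : N - (m + 1) ≤ N - 1 := by omega
      have e1 : N - (m + 1) + 1 = N - m := by omega
      have e2 : N - (m + 1) + 2 = N - m + 1 := by omega
      have hrec := hbt (N - (m + 1)) hn1 hn2
      rw [Finset.sum_range_succ' (fun k => (a (N - (m+1) + k) + η (N - (m+1) + k)) * z ^ k) (m+1)]
      have hsum : ∑ k ∈ range (m + 1),
          (a (N - (m+1) + (k + 1)) + η (N - (m+1) + (k + 1))) * z ^ (k + 1)
          = z * (bt (N - m) - w * bt (N - m + 1)) := by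
        rw [← ih hm, Finset.mul_sum]
        refine Finset.sum_congr rfl fun k _ => ?_
        have : N - (m + 1) + (k + 1) = N - m + k := by omega
        rw [this]; ring_nf
      rw [hsum, hrec, e1, e2, hpz, hqz]
      ring_nf
  have h1 : ∑ k ∈ range ((N - 1) + 1), (a (N - (N - 1) + k) + η (N - (N - 1) + k)) * z ^ k
      = bt (N - (N - 1)) - w * bt (N - (N - 1) + 1) := key (N - 1) le_rfl
  have e1 : N - (N - 1) = 1 := by omega
  have e2 : (N - 1) + 1 = N := by omega
  rw [e1, e2] at h1
  rw [Finset.sum_range_succ' (fun k => (a k + η k) * z ^ k) N]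
  have hsum : ∑ k ∈ range N, (a (k + 1) + η (k + 1)) * z ^ (k + 1)
      = z * (bt 1 - w * bt 2) := by
    rw [← h1, Finset.mul_sum]
    refine Finset.sum_congr rfl fun k _ => ?_
    rw [Nat.add_comm 1 k]; ring_nf
  rw [hsum, hut, hqz]
  have : z = (x : ℂ) + (y : ℂ) * I := hz
  rw [this]
  simp [hw]; ring_nf
end

section
/- Let N ≥ 2, let a_0, …, a_N and η_0, …, η_{N−1} be complex numbers (set η_N = 0), let x, y ∈ ℝ with z = x + iy, set p̂ = 2x, q̂ = −(x² + y²), and let δ_1, δ_2 ∈ ℂ. Define b̃_{N+1} = 0, b̃_N = a_N, b̃_n = (a_n + η_n) + p̂ b̃_{n+1} + q̂ b̃_{n+2} for n = N−1, …, 1, ũ = (a_0 + η_0) + x·b̃_1 + q̂·b̃_2, and w̃ = (ũ + i·y·b̃_1·(1 + δ_1))·(1 + δ_2). Let w(z) = Σ_{n=0}^N a_n z^n. Then w̃ − w(z) = δ_2·w(z) + (1 + δ_2)·Σ_{k=0}^{N} η_k z^k + i·y·b̃_1·δ_1·(1 + δ_2); consequently, if |δ_1|, |δ_2| ≤ ε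 then |w̃ − w(z)| ≤ ε·|w(z)| + (1 + ε)·Σ_{k=0}^{N} |η_k|·|z|^k + ε·(1 + ε)·|y|·|b̃_1|. -/
open Finset Complex

/-!
With `z̄ = x - iy` we have `z + z̄ = p̂` and `z z̄ = -q̂`, so the recurrence reads
`b̃ₙ - z̄ b̃ₙ₊₁ = (aₙ + ηₙ) + z (b̃ₙ₊₁ - z̄ b̃ₙ₊₂)`: the combination `b̃ₙ - z̄ b̃ₙ₊₁` runs Horner's
scheme for the perturbed coefficients `aₖ + ηₖ` at `z`, and `ũ + i y b̃₁` is its last step.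
Hence the computed value is exactly `(w(z) + ∑ ηₖ zᵏ + i y b̃₁ δ₁) (1 + δ₂)`, and the bound
is the triangle inequality.
-/

theorem sum_range_succ_mul_pow {R : Type*} [CommSemiring R] (c : ℕ → R) (z : R) (n : ℕ) :
    ∑ k ∈ range (n + 1), c k * z ^ k = c 0 + z * ∑ k ∈ range n, c (k + 1) * z ^ k := by
  rw [sum_range_succ', mul_sum, add_comm]
  simp only [pow_zero, mul_one, pow_succ', mul_left_comm z]

theorem sub_mul_succ_eq_sum_of_recurrence {R : Type*} [CommRing R] (c b : ℕ → R)
    (z w p q : R) (hp : z + w = p) (hq : z * w = -q) (N m : ℕ) (hm : m ≤ N)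
    (htop : b (N + 1) = 0) (hN : b N = c N)
    (hrec : ∀ n, m ≤ n → n < N → b n = c n + p * b (n + 1) + q * b (n + 2)) :
    b m - w * b (m + 1) = ∑ k ∈ range (N + 1 - m), c (m + k) * z ^ k := by
  induction hd : N - m generalizing m with
  | zero =>
    obtain rfl : m = N := by omega
    simp [htop, hN]
  | succ d ih =>
    have hnext := ih (m + 1) (by omega) (fun n h1 h2 => hrec n (by omega) h2) (by omega)
    rw [show N + 1 - m = N + 1 - (m + 1) + 1 by omega, sum_range_succ_mul_pow, add_zero]
    simp only [← add_assoc, add_right_comm m _ 1] at hnext ⊢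
    rw [← hnext, hrec m le_rfl (by omega)]
    linear_combination (-b (m + 1)) * hp + b (m + 2) * hq

theorem norm_sum_mul_pow_le {𝕜 : Type*} [NormedField 𝕜] (s : Finset ℕ) (c : ℕ → 𝕜) (z : 𝕜) :
    ‖∑ k ∈ s, c k * z ^ k‖ ≤ ∑ k ∈ s, ‖c k‖ * ‖z‖ ^ k :=
  (norm_sum_le _ _).trans_eq (sum_congr rfl fun _ _ => by rw [norm_mul, norm_pow])

theorem norm_rounding_error_le {𝕜 : Type*} [NormedRing 𝕜] [NormOneClass 𝕜]
    (w e t δ₁ δ₂ : 𝕜) (E ε : ℝ) (he : ‖e‖ ≤ E) (h₁ : ‖δ₁‖ ≤ ε) (h₂ : ‖δ₂‖ ≤ ε) :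
    ‖δ₂ * w + (1 + δ₂) * e + t * δ₁ * (1 + δ₂)‖ ≤ ε * ‖w‖ + (1 + ε) * E + ε * (1 + ε) * ‖t‖ := by
  have hε : 0 ≤ ε := (norm_nonneg _).trans h₁
  have hone : ‖1 + δ₂‖ ≤ 1 + ε := (norm_add_le _ _).trans (by rw [norm_one]; linarith)
  have hw : ‖δ₂ * w‖ ≤ ε * ‖w‖ :=
    (norm_mul_le _ _).trans (mul_le_mul_of_nonneg_right h₂ (norm_nonneg _))
  have he' : ‖(1 + δ₂) * e‖ ≤ (1 + ε) * E :=
    (norm_mul_le _ _).trans (mul_le_mul hone he (norm_nonneg _) (by positivity))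
  have ht : ‖t * δ₁ * (1 + δ₂)‖ ≤ ε * (1 + ε) * ‖t‖ := calc
    ‖t * δ₁ * (1 + δ₂)‖ ≤ ‖t‖ * ‖δ₁‖ * ‖1 + δ₂‖ := norm_mul₃_le
    _ ≤ ‖t‖ * ε * (1 + ε) := by gcongr
    _ = ε * (1 + ε) * ‖t‖ := by ring
  calc _ ≤ ‖δ₂ * w‖ + ‖(1 + δ₂) * e‖ + ‖t * δ₁ * (1 + δ₂)‖ := norm_add₃_le
    _ ≤ _ := by gcongr

/-- Exact error decomposition for Goertzel's algorithm in floating point,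
together with the resulting bound: with coefficient perturbations `η`
(`η N = 0`) and final rounding factors `δ₁, δ₂`, the computed value
`w̃ = (ũ + i y b̃₁ (1 + δ₁)) (1 + δ₂)` satisfies
`w̃ - w(z) = δ₂ w(z) + (1 + δ₂) ∑ η_k z^k + i y b̃₁ δ₁ (1 + δ₂)`, and if
`|δ₁|, |δ₂| ≤ ε` then
`|w̃ - w(z)| ≤ ε |w(z)| + (1 + ε) ∑ |η_k| |z|^k + ε (1 + ε) |y| |b̃₁|`. -/
theorem goertzel_error_decomposition (N : ℕ) (hN : 2 ≤ N) (a η : ℕ → ℂ)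
    (hηN : η N = 0) (x y : ℝ) (z : ℂ) (hz : z = (x : ℂ) + (y : ℂ) * I)
    (phat qhat : ℝ) (hp : phat = 2 * x) (hq : qhat = -(x ^ 2 + y ^ 2))
    (δ₁ δ₂ : ℂ)
    (bt : ℕ → ℂ) (hbtN1 : bt (N + 1) = 0) (hbtN : bt N = a N)
    (hbt : ∀ n, 1 ≤ n → n ≤ N - 1 →
      bt n = (a n + η n) + (phat : ℂ) * bt (n + 1) + (qhat : ℂ) * bt (n + 2))
    (ut : ℂ) (hut : ut = (a 0 + η 0) + (x : ℂ) * bt 1 + (qhat : ℂ) * bt 2)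
    (wt : ℂ) (hwt : wt = (ut + I * (y : ℂ) * bt 1 * (1 + δ₁)) * (1 + δ₂))
    (w : ℂ) (hw : w = ∑ n ∈ range (N + 1), a n * z ^ n) :
    wt - w = δ₂ * w + (1 + δ₂) * ∑ k ∈ range (N + 1), η k * z ^ k
        + I * (y : ℂ) * bt 1 * δ₁ * (1 + δ₂)
      ∧ ∀ ε : ℝ, ‖δ₁‖ ≤ ε → ‖δ₂‖ ≤ ε →
        ‖wt - w‖
          ≤ ε * ‖w‖
            + (1 + ε) * ∑ k ∈ range (N + 1), ‖η k‖ * ‖z‖ ^ k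
            + ε * (1 + ε) * |y| * ‖bt 1‖ := by
  set zbar : ℂ := x - y * I
  have hsum : z + zbar = phat := by rw [hz, hp]; push_cast; ring
  have hprod : z * zbar = -qhat := by
    rw [hz, hq]; push_cast; linear_combination (-(y : ℂ) ^ 2) * I_sq
  have hhorner : bt 1 - zbar * bt 2 = ∑ k ∈ range N, (a (k + 1) + η (k + 1)) * z ^ k := by
    have h := sub_mul_succ_eq_sum_of_recurrence (a + η) bt z zbar phat qhat hsum hprod N 1
      (by omega) hbtN1 (by simp [hbtN, hηN]) fun n h1 h2 => hbt n h1 (by omega)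
    simpa only [Nat.add_sub_cancel, Pi.add_apply, add_comm 1] using h
  have hperturbed : ut + I * y * bt 1 = w + ∑ k ∈ range (N + 1), η k * z ^ k := by
    rw [hw, ← sum_add_distrib]
    simp only [← add_mul]
    rw [sum_range_succ_mul_pow, ← hhorner, hut]
    linear_combination (-bt 1) * hz + bt 2 * hprod
  have hdec : wt - w = δ₂ * w + (1 + δ₂) * ∑ k ∈ range (N + 1), η k * z ^ k
      + I * (y : ℂ) * bt 1 * δ₁ * (1 + δ₂) := by
    rw [hwt]; linear_combination (1 + δ₂) * hperturbed
  refine ⟨hdec, fun ε h₁ h₂ => ?_⟩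
  have hbound := norm_rounding_error_le w _ (I * y * bt 1) δ₁ δ₂ _ ε
    (norm_sum_mul_pow_le (range (N + 1)) η z) h₁ h₂
  have hnorm : ‖I * y * bt 1‖ = |y| * ‖bt 1‖ := by simp
  rw [hdec]
  rwa [hnorm, ← mul_assoc] at hbound
end

section
/- Let N ∈ ℕ, let a_0, …, a_N be complex numbers, z ∈ ℂ, and let μ_0, …, μ_N, β ∈ ℂ satisfy |μ_n| ≤ α for all n and |β| ≤ ζ, where α, ζ ≥ 0. If w̃ = Σ_{n=0}^{N} a_n·(1 + μ_n)·(z·(1 + β))^n and w(z) = Σ_{n=0}^{N} a_n z^n, then |w̃ − w(z)| ≤ Σ_{n=0}^{N} |a_n|·|z|^n·((1 + α)·(1 + ζ)^n − 1). -/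
open Finset Complex

/-! The error splits termwise as `∑ aₙ zⁿ ((1 + μₙ)(1 + β)ⁿ - 1)`, and relative perturbations
compose submultiplicatively: `‖(1 + x)(1 + y) - 1‖ ≤ (1 + ‖x‖)(1 + ‖y‖) - 1`. -/

section RelativePerturbation

variable {R : Type*} [SeminormedRing R]

theorem norm_one_add_mul_one_add_sub_one_le (x y : R) :
    ‖(1 + x) * (1 + y) - 1‖ ≤ (1 + ‖x‖) * (1 + ‖y‖) - 1 := by
  have hexpand : (1 + x) * (1 + y) - 1 = x + y + x * y := by noncomm_ring
  calc ‖(1 + x) * (1 + y) - 1‖ ≤ ‖x‖ + ‖y‖ + ‖x‖ * ‖y‖ := by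
        rw [hexpand]
        grw [norm_add₃_le, norm_mul_le]
    _ = (1 + ‖x‖) * (1 + ‖y‖) - 1 := by ring

theorem norm_one_add_pow_sub_one_le (x : R) (n : ℕ) :
    ‖(1 + x) ^ n - 1‖ ≤ (1 + ‖x‖) ^ n - 1 := by
  induction n with
  | zero => simp
  | succ n ih =>
    calc ‖(1 + x) ^ (n + 1) - 1‖ = ‖(1 + ((1 + x) ^ n - 1)) * (1 + x) - 1‖ := by
          rw [add_sub_cancel, pow_succ]
      _ ≤ (1 + ‖(1 + x) ^ n - 1‖) * (1 + ‖x‖) - 1 := norm_one_add_mul_one_add_sub_one_le _ _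
      _ ≤ (1 + ‖x‖) ^ n * (1 + ‖x‖) - 1 := by grw [ih, add_sub_cancel]
      _ = (1 + ‖x‖) ^ (n + 1) - 1 := by rw [pow_succ]

theorem norm_one_add_mul_one_add_pow_sub_one_le (x y : R) (n : ℕ) :
    ‖(1 + x) * (1 + y) ^ n - 1‖ ≤ (1 + ‖x‖) * (1 + ‖y‖) ^ n - 1 :=
  calc ‖(1 + x) * (1 + y) ^ n - 1‖ = ‖(1 + x) * (1 + ((1 + y) ^ n - 1)) - 1‖ := by
        rw [add_sub_cancel]
    _ ≤ (1 + ‖x‖) * (1 + ‖(1 + y) ^ n - 1‖) - 1 := norm_one_add_mul_one_add_sub_one_le _ _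
    _ ≤ (1 + ‖x‖) * (1 + ‖y‖) ^ n - 1 := by grw [norm_one_add_pow_sub_one_le, add_sub_cancel]

end RelativePerturbation

theorem norm_perturbed_monomial_sub_le {R : Type*} [SeminormedCommRing R] [NormOneClass R]
    {a z μ β : R} {α ζ : ℝ} (hμ : ‖μ‖ ≤ α) (hβ : ‖β‖ ≤ ζ) (n : ℕ) :
    ‖a * (1 + μ) * (z * (1 + β)) ^ n - a * z ^ n‖ ≤ ‖a‖ * ‖z‖ ^ n * ((1 + α) * (1 + ζ) ^ n - 1) :=
  calc ‖a * (1 + μ) * (z * (1 + β)) ^ n - a * z ^ n‖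
        = ‖a * z ^ n * ((1 + μ) * (1 + β) ^ n - 1)‖ := by rw [mul_pow]; congr 1; ring
    _ ≤ ‖a‖ * ‖z‖ ^ n * ((1 + ‖μ‖) * (1 + ‖β‖) ^ n - 1) := by
        grw [norm_mul_le, norm_mul_le, norm_pow_le, norm_one_add_mul_one_add_pow_sub_one_le]
    _ ≤ ‖a‖ * ‖z‖ ^ n * ((1 + α) * (1 + ζ) ^ n - 1) := by
        gcongr
        linarith [norm_nonneg μ]

theorem backward_stable_forward_error_general (N : ℕ) (a : ℕ → ℂ) (z : ℂ)
    (μ : ℕ → ℂ) (β : ℂ) (α ζ : ℝ)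
    (hμ : ∀ n ≤ N, ‖μ n‖ ≤ α) (hβ : ‖β‖ ≤ ζ)
    (wt w : ℂ)
    (hwt : wt = ∑ n ∈ range (N + 1), a n * (1 + μ n) * (z * (1 + β)) ^ n)
    (hw : w = ∑ n ∈ range (N + 1), a n * z ^ n) :
    ‖wt - w‖
      ≤ ∑ n ∈ range (N + 1),
          ‖a n‖ * ‖z‖ ^ n * ((1 + α) * (1 + ζ) ^ n - 1) := by
  subst hwt hw
  rw [← sum_sub_distrib]
  refine (norm_sum_le _ _).trans (sum_le_sum fun n hn ↦ ?_)
  exact norm_perturbed_monomial_sub_le (hμ n (Nat.lt_succ_iff.mp (mem_range.mp hn))) hβ n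

/-- Forward-error bound from componentwise backward stability: if
`w̃ = ∑ a n (1 + μ n) (z (1 + β))^n` with `|μ n| ≤ α` and `|β| ≤ ζ`, then
`|w̃ - w(z)| ≤ ∑ |a n| |z|^n ((1 + α)(1 + ζ)^n - 1)`. -/
theorem backward_stable_forward_error (N : ℕ) (a : ℕ → ℂ) (z : ℂ)
    (μ : ℕ → ℂ) (β : ℂ) (α ζ : ℝ) (hα : 0 ≤ α) (hζ : 0 ≤ ζ)
    (hμ : ∀ n ≤ N, ‖μ n‖ ≤ α) (hβ : ‖β‖ ≤ ζ)
    (wt w : ℂ)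
    (hwt : wt = ∑ n ∈ range (N + 1), a n * (1 + μ n) * (z * (1 + β)) ^ n)
    (hw : w = ∑ n ∈ range (N + 1), a n * z ^ n) :
    ‖wt - w‖
      ≤ ∑ n ∈ range (N + 1),
          ‖a n‖ * ‖z‖ ^ n * ((1 + α) * (1 + ζ) ^ n - 1) :=
  backward_stable_forward_error_general N a z μ β α ζ hμ hβ wt w hwt hw
end
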